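/- Let γ be a sub-Riemannian geodesic in S³ parameterized by arc-length, of the form γ(t) = e^{-ict}γ_R(t) with c = ⟨v, V(p)⟩ where γ_R is the great circle with γ_R(0)=p, γ̇_R(0)=v. Then γ satisfies the equation ∇_{γ̇}γ̇ + 2c J(γ̇) = 0, where ∇ is the Levi-Civita connection of the round metric on S³ (the tangential projection of the second derivative in ℝ⁴) and J is the almost complex structure J(X(q)) = Y(q), J(Y(q)) = −X(q) on the horizontal distribution span{X,Y}. That is, γ has constant curvature λ = c = ⟨v, V(p)⟩. -/

import Mathlib

/-!
Writing `γ = e^{-ict} γ_R` with `γ_R'' = -‖v‖² γ_R` gives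
`γ'' + 2ic γ' + γ = e^{-ict} (1 + c² - ‖v‖²) γ_R = 0`.
Multiplication by `e^{-ict}` is unitary, so `⟪γ, γ⟫ = 1` and `⟪γ', γ⟫ = 0`: `γ'` lies in the
complex line `γ^⊥ = ℂ X(γ)`, on which `J` is multiplication by `i`. Pairing the equation with `γ`
gives `⟪γ'', γ⟫ = -1`, hence `∇_{γ'}γ' + 2c Jγ' = γ'' + γ + 2ic γ' = 0`.
-/

open Complex

noncomputable section

section Derivatives

variable {E : Type*} [NormedAddCommGroup E] [NormedSpace ℂ E] (p v : E) (c : ℝ)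

def greatCircle (t : ℝ) : E :=
  (Real.cos (‖v‖ * t) : ℂ) • p + ((Real.sin (‖v‖ * t) / ‖v‖ : ℝ) : ℂ) • v

def greatCircleVel (t : ℝ) : E :=
  ((-(‖v‖ * Real.sin (‖v‖ * t)) : ℝ) : ℂ) • p + (Real.cos (‖v‖ * t) : ℂ) • v

theorem hasDerivAt_greatCircle (t : ℝ) :
    HasDerivAt (greatCircle p v) (greatCircleVel p v t) t := by
  have hcos := ((Real.hasDerivAt_cos _).comp t (hasDerivAt_const_mul ‖v‖)).ofReal_comp
  have hsin := (((Real.hasDerivAt_sin _).comp t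
    (hasDerivAt_const_mul ‖v‖)).div_const ‖v‖).ofReal_comp
  refine ((hcos.smul_const p).add (hsin.smul_const v)).congr_deriv ?_
  rcases eq_or_ne v 0 with rfl | hv
  · simp [greatCircleVel]
  · have hv' : ‖v‖ ≠ 0 := norm_ne_zero_iff.mpr hv
    simp only [greatCircleVel]
    congr 3
    · ring
    · field_simp

theorem hasDerivAt_greatCircleVel (t : ℝ) :
    HasDerivAt (greatCircleVel p v) (-((‖v‖ ^ 2 : ℝ) : ℂ) • greatCircle p v t) t := by
  have hsin := (((Real.hasDerivAt_sin _).comp t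
    (hasDerivAt_const_mul ‖v‖)).const_mul ‖v‖).neg.ofReal_comp
  have hcos := ((Real.hasDerivAt_cos _).comp t (hasDerivAt_const_mul ‖v‖)).ofReal_comp
  refine ((hsin.smul_const p).add (hcos.smul_const v)).congr_deriv ?_
  rcases eq_or_ne v 0 with rfl | hv
  · simp [greatCircle]
  · have hv' : ‖v‖ ≠ 0 := norm_ne_zero_iff.mpr hv
    simp only [greatCircle, smul_add, smul_smul]
    congr 2 <;> push_cast <;> field_simp

theorem HasDerivAt.cexp_neg_mul_I_smul {f : ℝ → E} {f' : E} {t : ℝ} (hf : HasDerivAt f f' t) :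
    HasDerivAt (fun s : ℝ => Complex.exp (-(c * s) * I) • f s)
      (Complex.exp (-(c * t) * I) • (f' - ((c : ℂ) * I) • f t)) t := by
  have he : HasDerivAt (fun s : ℝ => Complex.exp (-(c * s) * I))
      (Complex.exp (-(c * t) * I) * -(c * I)) t := by
    have h := (((hasDerivAt_id (t : ℂ)).mul_const (-(c * I))).cexp).comp_ofReal
    convert h using 1
    · ext s; simp only [id]; ring_nf
    · simp only [id, one_mul]; ring_nf
  refine (he.smul hf).congr_deriv ?_
  rw [smul_sub, mul_neg, neg_smul, mul_smul, sub_eq_add_neg]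

def rotatedGreatCircle (t : ℝ) : E :=
  Complex.exp (-(c * t) * I) • greatCircle p v t

def rotatedGreatCircleVel (t : ℝ) : E :=
  Complex.exp (-(c * t) * I) • (greatCircleVel p v t - ((c : ℂ) * I) • greatCircle p v t)

theorem hasDerivAt_rotatedGreatCircle (t : ℝ) :
    HasDerivAt (rotatedGreatCircle p v c) (rotatedGreatCircleVel p v c t) t :=
  (hasDerivAt_greatCircle p v t).cexp_neg_mul_I_smul c

theorem hasDerivAt_rotatedGreatCircleVel (h : ‖v‖ ^ 2 = 1 + c ^ 2) (t : ℝ) :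
    HasDerivAt (rotatedGreatCircleVel p v c)
      (-rotatedGreatCircle p v c t - ((2 * c : ℂ) * I) • rotatedGreatCircleVel p v c t) t := by
  refine (((hasDerivAt_greatCircleVel p v t).sub ((hasDerivAt_greatCircle p v t).const_smul
    ((c : ℂ) * I))).cexp_neg_mul_I_smul c).congr_deriv ?_
  have hC : ((‖v‖ ^ 2 : ℝ) : ℂ) = 1 + (c : ℂ) ^ 2 := by exact_mod_cast h
  simp only [rotatedGreatCircle, rotatedGreatCircleVel, hC, Pi.sub_apply, Pi.smul_apply]
  linear_combination (norm := module)
    (-(Complex.exp (-(c * t) * I) * c ^ 2) * I_sq) • greatCircle p v t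

end Derivatives

section InnerProducts

variable {E : Type*} [NormedAddCommGroup E] [InnerProductSpace ℂ E] {p v : E} {c : ℝ}

theorem inner_swap_eq_neg_of_re_eq_zero (h : (inner ℂ v p).re = 0) :
    inner ℂ p v = -inner ℂ v p := by
  rw [← inner_conj_symm p v]
  apply Complex.ext <;> simp only [conj_re, conj_im, neg_re, neg_im, h, neg_zero]

theorem inner_greatCircle_self (hp : ‖p‖ = 1) (hvp : (inner ℂ v p).re = 0) (t : ℝ) :
    inner ℂ (greatCircle p v t) (greatCircle p v t) = 1 := by
  rcases eq_or_ne v 0 with rfl | hv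
  · simp [greatCircle, inner_self_eq_norm_sq_to_K, hp]
  have hv' : (‖v‖ : ℂ) ≠ 0 := by exact_mod_cast norm_ne_zero_iff.mpr hv
  have hpp : inner ℂ p p = 1 := by simp [inner_self_eq_norm_sq_to_K, hp]
  have hvv : inner ℂ v v = (‖v‖ : ℂ) ^ 2 := inner_self_eq_norm_sq_to_K v
  simp only [greatCircle, inner_add_left, inner_add_right, inner_smul_left, inner_smul_right,
    inner_swap_eq_neg_of_re_eq_zero hvp, hpp, hvv, conj_ofReal]
  push_cast
  field_simp
  linear_combination (‖v‖ : ℂ) * cos_sq_add_sin_sq ((‖v‖ : ℂ) * t)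

theorem inner_greatCircleVel_greatCircle (hp : ‖p‖ = 1) (hvp : (inner ℂ v p).re = 0)
    (t : ℝ) :
    inner ℂ (greatCircleVel p v t) (greatCircle p v t) = inner ℂ v p := by
  rcases eq_or_ne v 0 with rfl | hv
  · simp [greatCircleVel]
  have hv' : (‖v‖ : ℂ) ≠ 0 := by exact_mod_cast norm_ne_zero_iff.mpr hv
  have hpp : inner ℂ p p = 1 := by simp [inner_self_eq_norm_sq_to_K, hp]
  have hvv : inner ℂ v v = (‖v‖ : ℂ) ^ 2 := inner_self_eq_norm_sq_to_K v
  simp only [greatCircle, greatCircleVel, inner_add_left, inner_add_right, inner_smul_left,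
    inner_smul_right, inner_swap_eq_neg_of_re_eq_zero hvp, hpp, hvv, conj_ofReal]
  push_cast
  field_simp
  linear_combination (inner ℂ v p) * cos_sq_add_sin_sq ((‖v‖ : ℂ) * t)

theorem inner_smul_smul_of_norm_eq_one {a : ℂ} (ha : ‖a‖ = 1) (x y : E) :
    inner ℂ (a • x) (a • y) = inner ℂ x y := by
  rw [inner_smul_left, inner_smul_right, ← mul_assoc, conj_mul', ha]
  simp

theorem norm_cexp_neg_mul_I (c t : ℝ) : ‖Complex.exp (-(c * t) * I)‖ = 1 := by
  simp [Complex.norm_exp]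

theorem inner_rotatedGreatCircle_self (hp : ‖p‖ = 1) (hvp : (inner ℂ v p).re = 0) (t : ℝ) :
    inner ℂ (rotatedGreatCircle p v c t) (rotatedGreatCircle p v c t) = 1 := by
  rw [rotatedGreatCircle, inner_smul_smul_of_norm_eq_one (norm_cexp_neg_mul_I c t),
    inner_greatCircle_self hp hvp]

theorem inner_rotatedGreatCircleVel_rotatedGreatCircle (hp : ‖p‖ = 1)
    (hvp : inner ℂ v p = -(c * I)) (t : ℝ) :
    inner ℂ (rotatedGreatCircleVel p v c t) (rotatedGreatCircle p v c t) = 0 := by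
  have hre : (inner ℂ v p).re = 0 := by simp [hvp]
  rw [rotatedGreatCircle, rotatedGreatCircleVel,
    inner_smul_smul_of_norm_eq_one (norm_cexp_neg_mul_I c t), inner_sub_left, inner_smul_left,
    inner_greatCircleVel_greatCircle hp hre, inner_greatCircle_self hp hre, hvp]
  simp

end InnerProducts

section Frame

variable {E : Type*} [NormedAddCommGroup E] [InnerProductSpace ℂ E]

/-- `J(aX + bY) = -bX + aY` in the frame `X, Y = i • X`. -/
def frameJ (X w : E) : E :=
  (-(inner ℂ w (I • X)).re) • X + (inner ℂ w X).re • (I • X)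

theorem frameJ_eq_I_smul {X w : E} (hw : w = inner ℂ X w • X) : frameJ X w = I • w := by
  have hcoeff :
      ((-(inner ℂ w (I • X)).re : ℝ) : ℂ) + (inner ℂ w X).re * I = I * inner ℂ X w := by
    rw [inner_smul_right, ← inner_conj_symm X w]
    generalize inner ℂ w X = z
    apply Complex.ext <;> simp
  rw [frameJ, ← Complex.coe_smul, ← Complex.coe_smul, smul_smul, ← add_smul, hcoeff, mul_smul,
    ← hw]

def horizontalFrame (q : EuclideanSpace ℂ (Fin 2)) : EuclideanSpace ℂ (Fin 2) :=
  WithLp.toLp 2 ![-(starRingEnd ℂ) (q 1), (starRingEnd ℂ) (q 0)]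

theorem eq_inner_horizontalFrame_smul {q w : EuclideanSpace ℂ (Fin 2)} (hq : inner ℂ q q = 1)
    (hw : inner ℂ w q = 0) : w = inner ℂ (horizontalFrame q) w • horizontalFrame q := by
  simp only [PiLp.inner_apply, RCLike.inner_apply, Fin.sum_univ_two] at hq hw
  have hw' : starRingEnd ℂ (q 0) * w 0 + starRingEnd ℂ (q 1) * w 1 = 0 := by
    simpa using congrArg (starRingEnd ℂ) hw
  ext i
  fin_cases i <;> simp [horizontalFrame, PiLp.inner_apply, Fin.sum_univ_two]
  · linear_combination -w 0 * hq + q 0 * hw'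
  · linear_combination -w 1 * hq + q 1 * hw'

end Frame

end

/-- An arc-length sub-Riemannian geodesic `γ(t) = e^{-ict} γ_R(t)` on `S³ ⊂ ℂ²` satisfies
`∇_{γ̇}γ̇ + 2c J(γ̇) = 0`, i.e. it has constant curvature `λ = c = ⟨v, V(p)⟩`.
Here `∇_{γ̇}γ̇` is the tangential projection `γ̈ − ⟨γ̈, γ⟩ γ` of the ambient second derivative,
and `J` acts on horizontal vectors `w` by `J(w) = −⟨w, Y⟩ X + ⟨w, X⟩ Y`, i.e.
`J(X) = Y`, `J(Y) = −X` for the horizontal frame `X(q) = (-conj q₂, conj q₁)`, `Y = i·X`. -/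
theorem s3_geodesic_curvature_equation (p v : EuclideanSpace ℂ (Fin 2)) (hp : ‖p‖ = 1)
    (htan : (inner ℂ v p : ℂ).re = 0)
    (Xf Yf : EuclideanSpace ℂ (Fin 2) → EuclideanSpace ℂ (Fin 2))
    (hXf : ∀ q, Xf q = ![-(starRingEnd ℂ) (q 1), (starRingEnd ℂ) (q 0)])
    (hYf : ∀ q, Yf q = Complex.I • Xf q)
    (c : ℝ) (hc : c = (inner ℂ v (Complex.I • p) : ℂ).re)
    (harc : ‖v‖ ^ 2 = 1 + c ^ 2)
    (γ : ℝ → EuclideanSpace ℂ (Fin 2))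
    (hγ : ∀ t, γ t = Complex.exp (-(c * t) * Complex.I) •
      ((Real.cos (‖v‖ * t) : ℂ) • p + ((Real.sin (‖v‖ * t) / ‖v‖ : ℝ) : ℂ) • v)) :
    ∀ t,
      (deriv (deriv γ) t - ((inner ℂ (deriv (deriv γ) t) (γ t) : ℂ).re) • γ t) +
      (2 * c) • ((-((inner ℂ (deriv γ t) (Yf (γ t)) : ℂ).re)) • Xf (γ t) +
        ((inner ℂ (deriv γ t) (Xf (γ t)) : ℂ).re) • Yf (γ t)) = 0 := by
  intro t
  have hX : Xf = horizontalFrame := funext fun q => congrArg (WithLp.toLp 2) (hXf q)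
  have hvp : inner ℂ v p = -(c * I) := by
    rw [hc, inner_smul_right]
    apply Complex.ext <;> simp [htan]
  obtain rfl : γ = rotatedGreatCircle p v c := funext hγ
  have hvel : deriv (rotatedGreatCircle p v c) = rotatedGreatCircleVel p v c :=
    funext fun s => (hasDerivAt_rotatedGreatCircle p v c s).deriv
  have hacc := (hasDerivAt_rotatedGreatCircleVel p v c harc t).deriv
  set q := rotatedGreatCircle p v c t
  set w := rotatedGreatCircleVel p v c t
  have hq : inner ℂ q q = 1 := inner_rotatedGreatCircle_self hp htan t
  have hwq : inner ℂ w q = 0 := inner_rotatedGreatCircleVel_rotatedGreatCircle hp hvp t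
  have hJ : frameJ (horizontalFrame q) w = I • w :=
    frameJ_eq_I_smul (eq_inner_horizontalFrame_smul hq hwq)
  have hnormal : inner ℂ (-q - ((2 * c : ℂ) * I) • w) q = -1 := by
    rw [inner_sub_left, inner_neg_left, inner_smul_left, hq, hwq, mul_zero, sub_zero]
  simp only [hvel, hacc, hnormal, neg_re, one_re, hYf, hX]
  change _ + (2 * c) • frameJ (horizontalFrame q) w = 0
  rw [hJ]
  module
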